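/- arXiv:2005.14528 — 3 statements merged into one kernel-verified Lean document; each statement's English description precedes it below -/
import Mathlib

section
/- The surface curl of a tangential trace of a Nédélec field is well defined: if v_p, w_p ∈ N_p(K) have the same tangential component on a face F of the tetrahedron K (π_F^τ(v_p) = π_F^τ(w_p)), then (curl v_p)|_F · n_F = (curl w_p)|_F · n_F. -/
open MeasureTheory Metric Set

noncomputable section

abbrev V3 : Type := EuclideanSpace ℝ (Fin 3)

def mk3 (f : Fin 3 → ℝ) : V3 := WithLp.toLp 2 f

def dot3 (u v : V3) : ℝ := ∑ i, u i * v i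

def cross3 (u v : V3) : V3 :=
  mk3 ![u 1 * v 2 - u 2 * v 1, u 2 * v 0 - u 0 * v 2, u 0 * v 1 - u 1 * v 0]

/-- partial derivative in direction `j` -/
def pd (f : V3 → ℝ) (j : Fin 3) (x : V3) : ℝ :=
  fderiv ℝ f x (EuclideanSpace.single j (1:ℝ))

/-- pointwise curl of a vector field -/
def vcurl (φ : V3 → V3) (x : V3) : V3 :=
  mk3 ![pd (fun y => φ y 2) 1 x - pd (fun y => φ y 1) 2 x,
        pd (fun y => φ y 0) 2 x - pd (fun y => φ y 2) 0 x,
        pd (fun y => φ y 1) 0 x - pd (fun y => φ y 0) 1 x]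

/-- pointwise divergence -/
def vdiv (v : V3 → V3) (x : V3) : ℝ := ∑ j, pd (fun y => v y j) j x

def L2norm (K : Set V3) (v : V3 → V3) : ℝ :=
  Real.sqrt (∫ x in K, dot3 (v x) (v x))

def MemL2 (K : Set V3) (v : V3 → V3) : Prop :=
  MemLp v 2 (volume.restrict K)

/-- smooth vector fields compactly supported inside `K` -/
def TestIn (K : Set V3) (φ : V3 → V3) : Prop :=
  ContDiff ℝ (⊤ : ℕ∞) φ ∧ HasCompactSupport φ ∧ tsupport φ ⊆ interior K

/-- `r` is the distributional curl of `v` on `K` -/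
def HasWCurl (K : Set V3) (v r : V3 → V3) : Prop :=
  ∀ φ : V3 → V3, TestIn K φ →
    ∫ x in K, dot3 (v x) (vcurl φ x) = ∫ x in K, dot3 (r x) (φ x)

def MemHcurl (K : Set V3) (v r : V3 → V3) : Prop :=
  MemL2 K v ∧ MemL2 K r ∧ HasWCurl K v r

/-- `H¹` seminorm of a vector field -/
def h1semiV (K : Set V3) (φ : V3 → V3) : ℝ :=
  Real.sqrt (∫ x in K, ∑ i, ∑ j, (pd (fun y => φ y i) j x)^2)

/-- dual `H^{-1}` norm -/
def Hneg1norm (K : Set V3) (r : V3 → V3) : ℝ :=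
  sSup {t : ℝ | ∃ φ : V3 → V3, TestIn K φ ∧ h1semiV K φ = 1 ∧
    t = ∫ x in K, dot3 (r x) (φ x)}

structure Tetra where
  vert : Fin 4 → V3
  indep : AffineIndependent ℝ vert

namespace Tetra

def K (T : Tetra) : Set V3 := convexHull ℝ (Set.range T.vert)

/-- the three vertex indices different from `i` -/
def others (i : Fin 4) (j : Fin 3) : Fin 4 := i.succAbove j

/-- the face opposite to vertex `i` -/
def face (T : Tetra) (i : Fin 4) : Set V3 :=
  convexHull ℝ (T.vert '' {j | j ≠ i})

def rawNormal (T : Tetra) (i : Fin 4) : V3 :=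
  cross3 (T.vert (others i 1) - T.vert (others i 0))
         (T.vert (others i 2) - T.vert (others i 0))

/-- unit outward normal of the face opposite to vertex `i` -/
def normal (T : Tetra) (i : Fin 4) : V3 :=
  (if dot3 (T.rawNormal i) (T.vert i - T.vert (others i 0)) ≤ 0 then
     (Real.sqrt (dot3 (T.rawNormal i) (T.rawNormal i)))⁻¹
   else -(Real.sqrt (dot3 (T.rawNormal i) (T.rawNormal i)))⁻¹) • T.rawNormal i

/-- diameter -/
def h (T : Tetra) : ℝ := Metric.diam T.K

/-- diameter of the largest inscribed ball -/
def rho (T : Tetra) : ℝ :=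
  sSup {d : ℝ | 0 ≤ d ∧ ∃ x : V3, Metric.closedBall x (d/2) ⊆ T.K}

/-- shape-regularity parameter -/
def kappa (T : Tetra) : ℝ := T.h / T.rho

end Tetra

/-- tangential component w.r.t. unit normal `n` -/
def tang (n w : V3) : V3 := w - (dot3 w n) • n

def IsPolyDeg (p : ℕ) (f : V3 → ℝ) : Prop :=
  ∃ q : MvPolynomial (Fin 3) ℝ, q.totalDegree ≤ p ∧
    ∀ x : V3, f x = MvPolynomial.eval (fun i => x i) q

def IsPolyV (p : ℕ) (v : V3 → V3) : Prop := ∀ i, IsPolyDeg p fun x => v x i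

/-- Nédélec space `N_p = P_p^3 + x × P_p^3` -/
def MemNed (p : ℕ) (v : V3 → V3) : Prop :=
  ∃ a b : V3 → V3, IsPolyV p a ∧ IsPolyV p b ∧ ∀ x, v x = a x + cross3 x (b x)

/-- Raviart–Thomas space `RT_p = P_p^3 + x P_p` -/
def MemRT (p : ℕ) (v : V3 → V3) : Prop :=
  ∃ a : V3 → V3, ∃ q : V3 → ℝ, IsPolyV p a ∧ IsPolyDeg p q ∧ ∀ x, v x = a x + q x • x

/-- smooth test fields with vanishing tangential component on the faces not in `𝓕` -/
def TestTang (T : Tetra) (𝓕 : Finset (Fin 4)) (φ : V3 → V3) : Prop :=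
  ContDiff ℝ (⊤ : ℕ∞) φ ∧ ∀ i : Fin 4, i ∉ 𝓕 → ∀ x ∈ T.face i, tang (T.normal i) (φ x) = 0

/-- surface integral over the face opposite vertex `i` -/
def faceInt (T : Tetra) (i : Fin 4) (f : V3 → ℝ) : ℝ :=
  ∫ x in T.face i, f x ∂(μH[2])

/-- the weak tangential trace condition `v|^τ_𝓕 = r_𝓕`, for `v` with weak curl `r` -/
def WeakTrace (T : Tetra) (𝓕 : Finset (Fin 4)) (v r : V3 → V3)
    (rF : Fin 4 → V3 → V3) : Prop :=
  ∀ φ : V3 → V3, TestTang T 𝓕 φ →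
    (∫ x in T.K, dot3 (r x) (φ x)) - ∫ x in T.K, dot3 (v x) (vcurl φ x)
      = ∑ i ∈ 𝓕, faceInt T i (fun x => dot3 (rF i x) (cross3 (φ x) (T.normal i)))

/-- membership in the tangential Nédélec trace space `N_p^τ(Γ_𝓕)` -/
def IsNedTrace (T : Tetra) (𝓕 : Finset (Fin 4)) (p : ℕ) (rF : Fin 4 → V3 → V3) : Prop :=
  ∃ w : V3 → V3, MemNed p w ∧ ∀ i ∈ 𝓕, ∀ x ∈ T.face i, rF i x = tang (T.normal i) (w x)

/-- graph norm of `H(curl)` with length scale `ℓ` -/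
def curlNorm (K : Set V3) (ℓ : ℝ) (v r : V3 → V3) : ℝ :=
  Real.sqrt ((L2norm K v)^2 + ℓ^2 * (L2norm K r)^2)

/-- vanishing tangential trace on the whole boundary (integration by parts
against all smooth fields) -/
def ZeroFullTrace (K : Set V3) (w rw : V3 → V3) : Prop :=
  ∀ φ : V3 → V3, ContDiff ℝ (⊤ : ℕ∞) φ →
    ∫ x in K, dot3 (rw x) (φ x) = ∫ x in K, dot3 (w x) (vcurl φ x)

/-- quotient norm in `X^{-1/2}(∂K)` of the tangential trace of `v` -/
def XtraceNorm (K : Set V3) (ℓ : ℝ) (v rv : V3 → V3) : ℝ :=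
  sInf {t : ℝ | ∃ u ru, MemHcurl K u ru ∧
    ZeroFullTrace K (fun x => u x - v x) (fun x => ru x - rv x) ∧
    t = curlNorm K ℓ u ru}

def mvec (A : Matrix (Fin 3) (Fin 3) ℝ) (x : V3) : V3 := mk3 (A.mulVec fun i => x i)

def affMap (A : Matrix (Fin 3) (Fin 3) ℝ) (b : V3) (x : V3) : V3 := mvec A x + b

/-- covariant Piola transformation -/
def piola (A : Matrix (Fin 3) (Fin 3) ℝ) (b : V3) (v : V3 → V3) : V3 → V3 :=
  fun x => mvec A.transpose (v (affMap A b x))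

/-- transformation rule for curls under the covariant Piola map -/
def piolaCurl (A : Matrix (Fin 3) (Fin 3) ℝ) (b : V3) (r : V3 → V3) : V3 → V3 :=
  fun x => A.det • mvec A⁻¹ (r (affMap A b x))


open MvPolynomial in
lemma anal_eval (q : MvPolynomial (Fin 3) ℝ) :
    AnalyticOnNhd ℝ (fun x : V3 => MvPolynomial.eval (fun i => x i) q) Set.univ := by
  induction q using MvPolynomial.induction_on with
  | C a => simpa using (analyticOnNhd_const : AnalyticOnNhd ℝ (fun _ : V3 => a) univ)
  | add p q hp hq => simp only [MvPolynomial.eval_add]; exact hp.add hq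
  | mul_X p i hp =>
      have hproj : AnalyticOnNhd ℝ (fun x : V3 => x i) univ := by
        simpa using (EuclideanSpace.proj (𝕜 := ℝ) i).analyticOnNhd univ
      simpa [MvPolynomial.eval_mul] using hp.mul hproj

lemma poly_anal {p : ℕ} {f : V3 → ℝ} (h : IsPolyDeg p f) : AnalyticOnNhd ℝ f univ := by
  obtain ⟨q, -, hq⟩ := h
  have : f = fun x => MvPolynomial.eval (fun i => x i) q := funext hq
  rw [this]; exact anal_eval q

lemma coord_anal (j : Fin 3) : AnalyticOnNhd ℝ (fun x : V3 => x j) univ := by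
  simpa using (EuclideanSpace.proj (𝕜 := ℝ) j).analyticOnNhd univ

lemma ned_anal {p : ℕ} {v : V3 → V3} (h : MemNed p v) (k : Fin 3) :
    AnalyticOnNhd ℝ (fun x => v x k) univ := by
  obtain ⟨a, b, ha, hb, hv⟩ := h
  have hva : (fun x => v x k) = fun x => a x k + cross3 x (b x) k := by
    funext x; rw [hv x]; rfl
  rw [hva]
  refine (poly_anal (ha k)).add ?_
  fin_cases k <;>
    simp only [cross3, mk3, Matrix.cons_val_zero, Matrix.cons_val_one, Matrix.head_cons,
      Matrix.cons_val_two, Matrix.tail_cons, Fin.isValue] <;>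
    exact ((coord_anal _).mul (poly_anal (hb _))).sub ((coord_anal _).mul (poly_anal (hb _)))

lemma fin3_cases {P : Fin 3 → Prop} (h0 : P 0) (h1 : P 1) (h2 : P 2) : ∀ k, P k := by
  intro k; fin_cases k
  · exact h0
  · exact h1
  · exact h2

lemma cross3_app0 (u v : V3) : cross3 u v 0 = u 1 * v 2 - u 2 * v 1 := by unfold cross3 mk3; rfl
lemma cross3_app1 (u v : V3) : cross3 u v 1 = u 2 * v 0 - u 0 * v 2 := by unfold cross3 mk3; rfl
lemma cross3_app2 (u v : V3) : cross3 u v 2 = u 0 * v 1 - u 1 * v 0 := by unfold cross3 mk3; rfl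
lemma v3_add_app (u v : V3) (k : Fin 3) : (u + v) k = u k + v k := rfl
lemma v3_sub_app (u v : V3) (k : Fin 3) : (u - v) k = u k - v k := rfl
lemma v3_smul_app (c : ℝ) (u : V3) (k : Fin 3) : (c • u) k = c * u k := rfl
lemma dot3_expand (u v : V3) : dot3 u v = u 0 * v 0 + u 1 * v 1 + u 2 * v 2 := by
  simp [dot3, Fin.sum_univ_three]

lemma single_app (j k : Fin 3) : (EuclideanSpace.single j (1:ℝ)) k = if k = j then 1 else 0 :=
  EuclideanSpace.single_apply j 1 k

lemma decomp (u1 u2 : V3) :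
    ∀ j : Fin 3, (dot3 (cross3 u1 u2) (cross3 u1 u2)) • (EuclideanSpace.single j (1:ℝ)) =
      (u1 j * dot3 u2 u2 - u2 j * dot3 u1 u2) • u1 +
      (u2 j * dot3 u1 u1 - u1 j * dot3 u1 u2) • u2 +
      (cross3 u1 u2 j) • (cross3 u1 u2) := by
  apply fin3_cases <;> refine PiLp.ext (fin3_cases ?_ ?_ ?_) <;>
    simp only [v3_add_app, v3_smul_app, single_app, cross3_app0, cross3_app1, cross3_app2,
      dot3_expand, reduceIte, Fin.reduceEq] <;> ring

lemma face_param (T : Tetra) (i : Fin 4) :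
    ∀ x ∈ T.face i, ∃ s t : ℝ,
      x = T.vert (Tetra.others i 0) + s • (T.vert (Tetra.others i 1) - T.vert (Tetra.others i 0))
        + t • (T.vert (Tetra.others i 2) - T.vert (Tetra.others i 0)) := by
  intro x hx
  suffices hsub : T.face i ⊆ {y : V3 | ∃ s t : ℝ,
      y = T.vert (Tetra.others i 0) + s • (T.vert (Tetra.others i 1) - T.vert (Tetra.others i 0))
        + t • (T.vert (Tetra.others i 2) - T.vert (Tetra.others i 0))} from hsub hx
  refine convexHull_min ?_ ?_
  · rintro y ⟨j, hj, rfl⟩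
    obtain ⟨m, rfl⟩ := Fin.exists_succAbove_eq (show j ≠ i from hj)
    have : ∀ m : Fin 3, ∃ s t : ℝ,
        T.vert (i.succAbove m) = T.vert (Tetra.others i 0)
          + s • (T.vert (Tetra.others i 1) - T.vert (Tetra.others i 0))
          + t • (T.vert (Tetra.others i 2) - T.vert (Tetra.others i 0)) := by
      apply fin3_cases
      · exact ⟨0, 0, by simp only [Tetra.others]; module⟩
      · exact ⟨1, 0, by simp only [Tetra.others]; module⟩
      · exact ⟨0, 1, by simp only [Tetra.others]; module⟩
    exact this m
  · rintro y ⟨s1, t1, rfl⟩ z ⟨s2, t2, rfl⟩ α β hα hβ hαβ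
    exact ⟨α * s1 + β * s2, α * t1 + β * t2, by
      linear_combination (norm := module) hαβ • (T.vert (Tetra.others i 0))⟩

lemma face_mem (T : Tetra) (i : Fin 4) (s t : ℝ) (hs : 0 ≤ s) (ht : 0 ≤ t) (hst : s + t ≤ 1) :
    T.vert (Tetra.others i 0) + s • (T.vert (Tetra.others i 1) - T.vert (Tetra.others i 0))
      + t • (T.vert (Tetra.others i 2) - T.vert (Tetra.others i 0)) ∈ T.face i := by
  have hmem : ∀ m : Fin 3, T.vert (Tetra.others i m) ∈ T.vert '' {j | j ≠ i} :=
    fun m => ⟨_, Fin.succAbove_ne i m, rfl⟩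
  have heq : T.vert (Tetra.others i 0)
      + s • (T.vert (Tetra.others i 1) - T.vert (Tetra.others i 0))
      + t • (T.vert (Tetra.others i 2) - T.vert (Tetra.others i 0))
      = ∑ m : Fin 3, ![1 - s - t, s, t] m •
          ![T.vert (Tetra.others i 0), T.vert (Tetra.others i 1), T.vert (Tetra.others i 2)] m := by
    simp [Fin.sum_univ_three]
    module
  rw [heq]
  apply (convex_convexHull ℝ _).sum_mem
  · intro m _
    refine fin3_cases (P := fun m => (0:ℝ) ≤ ![1 - s - t, s, t] m) ?_ ?_ ?_ m <;>
      simp <;> linarith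
  · simp [Fin.sum_univ_three]; ring
  · intro m _
    refine fin3_cases (P := fun m =>
      ![T.vert (Tetra.others i 0), T.vert (Tetra.others i 1), T.vert (Tetra.others i 2)] m
        ∈ T.face i) ?_ ?_ ?_ m <;>
      · simp only [Matrix.cons_val_zero, Matrix.cons_val_one, Matrix.head_cons,
          Matrix.cons_val_two, Matrix.tail_cons]
        exact subset_convexHull ℝ _ (hmem _)

lemma v3_zero_app (k : Fin 3) : (0 : V3) k = 0 := rfl
lemma vcurl_app0 (φ : V3 → V3) (y : V3) :
    vcurl φ y 0 = pd (fun z => φ z 2) 1 y - pd (fun z => φ z 1) 2 y := by unfold vcurl mk3; rfl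
lemma vcurl_app1 (φ : V3 → V3) (y : V3) :
    vcurl φ y 1 = pd (fun z => φ z 0) 2 y - pd (fun z => φ z 2) 0 y := by unfold vcurl mk3; rfl
lemma vcurl_app2 (φ : V3 → V3) (y : V3) :
    vcurl φ y 2 = pd (fun z => φ z 1) 0 y - pd (fun z => φ z 0) 1 y := by unfold vcurl mk3; rfl


/-- The surface curl is well defined: two Nédélec fields with the same tangential component
on a face have the same normal component of the curl on that face. -/
theorem stmt4 (T : Tetra) (i : Fin 4) (p : ℕ) (v w : V3 → V3)
    (hv : MemNed p v) (hw : MemNed p w)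
    (h : ∀ x ∈ T.face i, tang (T.normal i) (v x) = tang (T.normal i) (w x)) :
    ∀ x ∈ T.face i, dot3 (vcurl v x) (T.normal i) = dot3 (vcurl w x) (T.normal i) := by

  classical
  intro x hx
  obtain ⟨cs, hcs⟩ : ∃ c : ℝ, T.normal i = c • T.rawNormal i := ⟨_, rfl⟩
  by_cases hr0 : T.rawNormal i = 0
  · rw [hcs, hr0, smul_zero]
    simp [dot3_expand, v3_zero_app]
  set a := T.vert (Tetra.others i 0) with ha
  set v1 := T.vert (Tetra.others i 1) - a with hv1
  set v2 := T.vert (Tetra.others i 2) - a with hv2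
  set raw := T.rawNormal i with hrawdef
  set n := T.normal i with hn
  have hrawc : raw = cross3 v1 v2 := rfl
  have hnk : ∀ k : Fin 3, n k = cs * raw k := fun k => by rw [hcs]; rfl
  set R := dot3 raw raw with hRdef
  have hRne : R ≠ 0 := by
    intro h0
    apply hr0
    rw [hRdef, dot3_expand] at h0
    have t0 : raw 0 = 0 := mul_self_eq_zero.mp (le_antisymm
      (by linarith [mul_self_nonneg (raw 1), mul_self_nonneg (raw 2)]) (mul_self_nonneg _))
    have t1 : raw 1 = 0 := mul_self_eq_zero.mp (le_antisymm
      (by linarith [mul_self_nonneg (raw 0), mul_self_nonneg (raw 2)]) (mul_self_nonneg _))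
    have t2 : raw 2 = 0 := mul_self_eq_zero.mp (le_antisymm
      (by linarith [mul_self_nonneg (raw 0), mul_self_nonneg (raw 1)]) (mul_self_nonneg _))
    exact PiLp.ext (fin3_cases t0 t1 t2)
  -- difference field and analyticity
  set d := fun z : V3 => v z - w z with hd
  have hdanal : ∀ k : Fin 3, AnalyticOnNhd ℝ (fun z => d z k) univ := by
    intro k
    have hh : (fun z => d z k) = fun z => v z k - w z k := by funext z; rw [hd]; rfl
    rw [hh]
    exact (ned_anal hv k).sub (ned_anal hw k)
  have hddiff : ∀ (k : Fin 3) (y : V3), DifferentiableAt ℝ (fun z => d z k) y :=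
    fun k y => ((hdanal k) y (mem_univ y)).differentiableAt
  have hvdiff : ∀ (k : Fin 3) (y : V3), DifferentiableAt ℝ (fun z => v z k) y :=
    fun k y => ((ned_anal hv k) y (mem_univ y)).differentiableAt
  have hwdiff : ∀ (k : Fin 3) (y : V3), DifferentiableAt ℝ (fun z => w z k) y :=
    fun k y => ((ned_anal hw k) y (mem_univ y)).differentiableAt
  -- hypothesis componentwise
  have hface : ∀ z ∈ T.face i, ∀ k : Fin 3, d z k = dot3 (d z) n * n k := by
    intro z hz k
    have ht' : v z k - dot3 (v z) n * n k = w z k - dot3 (w z) n * n k := congrArg (fun u : V3 => u k) (h z hz)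
    have hdz : ∀ m : Fin 3, d z m = v z m - w z m := fun m => by rw [hd]; rfl
    have hdot : dot3 (d z) n = dot3 (v z) n - dot3 (w z) n := by
      rw [dot3_expand, dot3_expand, dot3_expand, hdz 0, hdz 1, hdz 2]; ring
    rw [hdz k, hdot]
    linear_combination ht'
  -- parametrization
  obtain ⟨s0, t0, hx0⟩ := face_param T i x hx
  set L := (ContinuousLinearMap.fst ℝ ℝ ℝ).smulRight v1
    + (ContinuousLinearMap.snd ℝ ℝ ℝ).smulRight v2 with hL
  set P := fun y : ℝ × ℝ => a + L y with hP
  have hPapp : ∀ y : ℝ × ℝ, P y = a + y.1 • v1 + y.2 • v2 := by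
    intro y
    rw [hP, hL]
    simp [add_assoc]
  have hPanal : AnalyticOnNhd ℝ P univ := by
    rw [hP]; exact analyticOnNhd_const.add (L.analyticOnNhd univ)
  set y0 : ℝ × ℝ := (s0, t0) with hy0
  have hxP : P y0 = x := by rw [hPapp]; exact hx0.symm
  -- the scalar multiplier
  set c := fun y : ℝ × ℝ => dot3 (d (P y)) n with hc
  have hcanal : AnalyticOnNhd ℝ c univ := by
    have hh : c = fun y => d (P y) 0 * n 0 + d (P y) 1 * n 1 + d (P y) 2 * n 2 := by
      funext y; rw [hc]; exact dot3_expand _ _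
    rw [hh]
    have hcomp : ∀ k : Fin 3, AnalyticOnNhd ℝ (fun y => d (P y) k) univ :=
      fun k => (hdanal k).comp hPanal (Set.mapsTo_univ _ _)
    exact (((hcomp 0).mul analyticOnNhd_const).add
      ((hcomp 1).mul analyticOnNhd_const)).add ((hcomp 2).mul analyticOnNhd_const)
  -- identity theorem : the trace relation holds on the whole plane
  have key : ∀ (k : Fin 3) (y : ℝ × ℝ), d (P y) k = c y * n k := by
    intro k
    have hganal : AnalyticOnNhd ℝ (fun y => d (P y) k - c y * n k) univ :=
      ((hdanal k).comp hPanal (Set.mapsTo_univ _ _)).sub (hcanal.mul analyticOnNhd_const)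
    have hopen : IsOpen {y : ℝ × ℝ | 0 < y.1 ∧ 0 < y.2 ∧ y.1 + y.2 < 1} :=
      (isOpen_lt continuous_const continuous_fst).inter
        ((isOpen_lt continuous_const continuous_snd).inter
          (isOpen_lt (continuous_fst.add continuous_snd) continuous_const))
    have hmem14 : ((1/4, 1/4) : ℝ × ℝ) ∈ {y : ℝ × ℝ | 0 < y.1 ∧ 0 < y.2 ∧ y.1 + y.2 < 1} := by
      constructor
      · norm_num
      constructor <;> norm_num
    have hzero : ∀ y ∈ {y : ℝ × ℝ | 0 < y.1 ∧ 0 < y.2 ∧ y.1 + y.2 < 1},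
        (fun y => d (P y) k - c y * n k) y = 0 := by
      rintro y ⟨hy1, hy2, hy3⟩
      have hyf : P y ∈ T.face i := by
        rw [hPapp]
        exact face_mem T i y.1 y.2 hy1.le hy2.le hy3.le
      rw [sub_eq_zero]
      exact hface (P y) hyf k
    have hev : (fun y => d (P y) k - c y * n k) =ᶠ[nhds ((1/4, 1/4) : ℝ × ℝ)] 0 := by
      filter_upwards [hopen.mem_nhds hmem14] with y hy using hzero y hy
    have heq := hganal.eqOn_zero_of_preconnected_of_eventuallyEq_zero
      isPreconnected_univ (mem_univ _) hev
    intro y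
    have hy : d (P y) k - c y * n k = 0 := heq (mem_univ y)
    linarith [hy]
  -- derivative identities
  have hcdiff : DifferentiableAt ℝ c y0 := (hcanal y0 (mem_univ _)).differentiableAt
  have hkey2 : ∀ k : Fin 3,
      (fderiv ℝ (fun z => d z k) x).comp L = n k • fderiv ℝ c y0 := by
    intro k
    have hDk : HasFDerivAt (fun z => d z k) (fderiv ℝ (fun z => d z k) x) (P y0) := by
      rw [hxP]; exact (hddiff k x).hasFDerivAt
    have hcomp : HasFDerivAt (fun y => d (P y) k)
        ((fderiv ℝ (fun z => d z k) x).comp L) y0 :=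
      HasFDerivAt.comp y0 hDk ((L.hasFDerivAt).const_add a)
    have hmul : HasFDerivAt (fun y => c y * n k) (n k • fderiv ℝ c y0) y0 :=
      hcdiff.hasFDerivAt.mul_const (n k)
    have heqf : (fun y => d (P y) k) = fun y => c y * n k := funext fun y => key k y
    rw [heqf] at hcomp
    exact hcomp.unique hmul
  have hL10 : L ((1:ℝ), (0:ℝ)) = v1 := by rw [hL]; simp
  have hL01 : L ((0:ℝ), (1:ℝ)) = v2 := by rw [hL]; simp
  have hDv1 : ∀ k : Fin 3, fderiv ℝ (fun z => d z k) x v1 = n k * fderiv ℝ c y0 (1, 0) := by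
    intro k
    have h' := DFunLike.congr_fun (hkey2 k) ((1:ℝ), (0:ℝ))
    rwa [ContinuousLinearMap.comp_apply, hL10, ContinuousLinearMap.smul_apply,
      smul_eq_mul] at h'
  have hDv2 : ∀ k : Fin 3, fderiv ℝ (fun z => d z k) x v2 = n k * fderiv ℝ c y0 (0, 1) := by
    intro k
    have h' := DFunLike.congr_fun (hkey2 k) ((0:ℝ), (1:ℝ))
    rwa [ContinuousLinearMap.comp_apply, hL01, ContinuousLinearMap.smul_apply,
      smul_eq_mul] at h'
  have hdecomp : ∀ j : Fin 3, R • (EuclideanSpace.single j (1:ℝ)) =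
      (v1 j * dot3 v2 v2 - v2 j * dot3 v1 v2) • v1 +
      (v2 j * dot3 v1 v1 - v1 j * dot3 v1 v2) • v2 +
      (raw j) • raw := by
    intro j
    simp only [hRdef, hrawc]
    exact decomp v1 v2 j
  have hq : ∀ k j : Fin 3, R * pd (fun z => d z k) j x
      = n k * ((v1 j * dot3 v2 v2 - v2 j * dot3 v1 v2) * fderiv ℝ c y0 (1, 0)
             + (v2 j * dot3 v1 v1 - v1 j * dot3 v1 v2) * fderiv ℝ c y0 (0, 1))
        + raw j * (fderiv ℝ (fun z => d z k) x raw) := by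
    intro k j
    have hstep : fderiv ℝ (fun z => d z k) x (R • EuclideanSpace.single j (1:ℝ))
        = R * pd (fun z => d z k) j x := by
      rw [_root_.map_smul]; rfl
    rw [← hstep, hdecomp j, map_add, map_add, _root_.map_smul, _root_.map_smul, _root_.map_smul,
      hDv1 k, hDv2 k]
    simp only [smul_eq_mul]
    ring
  -- linearity of pd
  have hpdsub : ∀ k j : Fin 3, pd (fun z => v z k) j x
      = pd (fun z => d z k) j x + pd (fun z => w z k) j x := by
    intro k j
    have h1 : (fun z => d z k) = fun z => v z k - w z k := by funext z; rw [hd]; rfl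
    have h2 : pd (fun z => d z k) j x
        = pd (fun z => v z k) j x - pd (fun z => w z k) j x := by
      show fderiv ℝ _ x _ = _
      rw [h1, fderiv_fun_sub (hvdiff k x) (hwdiff k x)]
      rfl
    linarith [h2]
  -- final computation
  rw [dot3_expand, dot3_expand, vcurl_app0 v x, vcurl_app1 v x, vcurl_app2 v x,
    vcurl_app0 w x, vcurl_app1 w x, vcurl_app2 w x,
    hpdsub 2 1, hpdsub 1 2, hpdsub 0 2, hpdsub 2 0, hpdsub 1 0, hpdsub 0 1]
  have hz : R * (n 0 * (pd (fun z => d z 2) 1 x - pd (fun z => d z 1) 2 x)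
      + n 1 * (pd (fun z => d z 0) 2 x - pd (fun z => d z 2) 0 x)
      + n 2 * (pd (fun z => d z 1) 0 x - pd (fun z => d z 0) 1 x)) = 0 := by
    have e21 := hq 2 1; have e12 := hq 1 2; have e02 := hq 0 2
    have e20 := hq 2 0; have e10 := hq 1 0; have e01 := hq 0 1
    simp only [hnk] at e21 e12 e02 e20 e10 e01 ⊢
    linear_combination (cs * raw 0) * e21 - (cs * raw 0) * e12
      + (cs * raw 1) * e02 - (cs * raw 1) * e20
      + (cs * raw 2) * e10 - (cs * raw 2) * e01
  have hS : n 0 * (pd (fun z => d z 2) 1 x - pd (fun z => d z 1) 2 x)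
      + n 1 * (pd (fun z => d z 0) 2 x - pd (fun z => d z 2) 0 x)
      + n 2 * (pd (fun z => d z 1) 0 x - pd (fun z => d z 0) 1 x) = 0 :=
    (mul_eq_zero.mp hz).resolve_left hRne
  linear_combination hS

end
end

section
/- The covariant Piola transformation maps Nédélec spaces to Nédélec spaces: for any invertible affine map T with K = T(K̂) and any p ≥ 0, ψ_T^c(v) = (J_T)^T (v ∘ T) is a bijection from N_p(K) onto N_p(K̂). -/
open MeasureTheory Metric Set

noncomputable section

/-! ### Auxiliary lemmas for stmt9 -/

open MvPolynomial in
lemma aux_totalDegree_eval₂_le (g : Fin 3 → MvPolynomial (Fin 3) ℝ)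
    (hg : ∀ i, (g i).totalDegree ≤ 1) (q : MvPolynomial (Fin 3) ℝ) :
    (eval₂ C g q).totalDegree ≤ q.totalDegree := by
  conv_lhs => rw [q.as_sum]
  rw [eval₂_sum]
  refine (totalDegree_finset_sum _ _).trans (Finset.sup_le fun s hs => ?_)
  rw [eval₂_monomial]
  refine (totalDegree_mul _ _).trans ?_
  rw [totalDegree_C, zero_add, Finsupp.prod]
  refine (totalDegree_finset_prod _ _).trans ?_
  refine le_trans ?_ (le_totalDegree hs)
  rw [Finsupp.sum]
  refine Finset.sum_le_sum fun i _ => ?_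
  calc (g i ^ s i).totalDegree ≤ s i * (g i).totalDegree := totalDegree_pow _ _
    _ ≤ s i * 1 := Nat.mul_le_mul_left _ (hg i)
    _ = s i := Nat.mul_one _

lemma IsPolyDeg.addP {p : ℕ} {f g : V3 → ℝ} (hf : IsPolyDeg p f) (hg : IsPolyDeg p g) :
    IsPolyDeg p (fun x => f x + g x) := by
  obtain ⟨q1, h1, e1⟩ := hf
  obtain ⟨q2, h2, e2⟩ := hg
  exact ⟨q1 + q2, (MvPolynomial.totalDegree_add q1 q2).trans (max_le h1 h2),
    fun x => by simp [e1 x, e2 x]⟩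

lemma IsPolyDeg.constMul {p : ℕ} (c : ℝ) {f : V3 → ℝ} (hf : IsPolyDeg p f) :
    IsPolyDeg p (fun x => c * f x) := by
  obtain ⟨q, h, e⟩ := hf
  refine ⟨MvPolynomial.C c * q, ?_, fun x => by simp [e x]⟩
  refine (MvPolynomial.totalDegree_mul _ _).trans ?_
  simp [MvPolynomial.totalDegree_C, h]

lemma IsPolyDeg.subP {p : ℕ} {f g : V3 → ℝ} (hf : IsPolyDeg p f) (hg : IsPolyDeg p g) :
    IsPolyDeg p (fun x => f x - g x) := by
  have := hf.addP (hg.constMul (-1))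
  simpa [sub_eq_add_neg] using this

lemma isPolyDeg_sum {p : ℕ} {f : Fin 3 → V3 → ℝ} (hf : ∀ j, IsPolyDeg p (f j)) :
    IsPolyDeg p (fun x => ∑ j, f j x) := by
  classical
  have h0 : IsPolyDeg p (fun _ : V3 => (0:ℝ)) := ⟨0, by simp, fun x => by simp⟩
  have : ∀ s : Finset (Fin 3), IsPolyDeg p (fun x => ∑ j ∈ s, f j x) := by
    intro s
    induction s using Finset.induction with
    | empty => simpa using h0
    | @insert a s' hj ih =>
      have := (hf a).addP ih
      simpa [Finset.sum_insert hj] using this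
  exact this Finset.univ

lemma IsPolyDeg.compAffine {p : ℕ} (A : Matrix (Fin 3) (Fin 3) ℝ) (b : V3) {f : V3 → ℝ}
    (hf : IsPolyDeg p f) : IsPolyDeg p (fun x => f (affMap A b x)) := by
  classical
  obtain ⟨q, hq, e⟩ := hf
  set g : Fin 3 → MvPolynomial (Fin 3) ℝ :=
    fun j => (∑ k, MvPolynomial.C (A j k) * MvPolynomial.X k) + MvPolynomial.C (b j) with hgdef
  have hg : ∀ j, (g j).totalDegree ≤ 1 := by
    intro j
    refine (MvPolynomial.totalDegree_add _ _).trans (max_le ?_ ?_)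
    · refine (MvPolynomial.totalDegree_finset_sum _ _).trans (Finset.sup_le fun k _ => ?_)
      refine (MvPolynomial.totalDegree_mul _ _).trans ?_
      simp [MvPolynomial.totalDegree_C, MvPolynomial.totalDegree_X]
    · simp [MvPolynomial.totalDegree_C]
  refine ⟨MvPolynomial.eval₂ MvPolynomial.C g q,
    (aux_totalDegree_eval₂_le g hg q).trans hq, fun x => ?_⟩
  show f (affMap A b x) = _
  rw [e (affMap A b x), ← MvPolynomial.eval_assoc]
  have harg : (fun i => affMap A b x i) = ⇑(MvPolynomial.eval fun i => x i) ∘ g := by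
    funext j
    simp only [Function.comp, hgdef]
    have h2 : (affMap A b x) j = (∑ k, A j k * x k) + b j := by
      simp [affMap, mvec, mk3, Matrix.mulVec, dotProduct, Fin.sum_univ_three,
        PiLp.add_apply]
    rw [h2]
    simp
  rw [harg]

lemma IsPolyV.addV {p : ℕ} {u v : V3 → V3} (hu : IsPolyV p u) (hv : IsPolyV p v) :
    IsPolyV p (fun x => u x + v x) := by
  intro i
  have := (hu i).addP (hv i)
  simpa [PiLp.add_apply] using this

lemma IsPolyV.compAffineV {p : ℕ} (A : Matrix (Fin 3) (Fin 3) ℝ) (b : V3) {u : V3 → V3}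
    (hu : IsPolyV p u) : IsPolyV p (fun x => u (affMap A b x)) :=
  fun i => (hu i).compAffine A b

lemma IsPolyV.mvecV {p : ℕ} (M : Matrix (Fin 3) (Fin 3) ℝ) {u : V3 → V3}
    (hu : IsPolyV p u) : IsPolyV p (fun x => mvec M (u x)) := by
  intro i
  have h : (fun x => mvec M (u x) i) = fun x => ∑ j, M i j * u x j := by
    funext x; simp [mvec, mk3, Matrix.mulVec, dotProduct]
  rw [h]
  exact isPolyDeg_sum fun j => (hu j).constMul (M i j)

lemma IsPolyV.crossConstV {p : ℕ} (c : V3) {u : V3 → V3} (hu : IsPolyV p u) :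
    IsPolyV p (fun x => cross3 c (u x)) := by
  intro i
  fin_cases i
  · show IsPolyDeg p fun x => cross3 c (u x) (0 : Fin 3)
    have h : (fun x => cross3 c (u x) (0 : Fin 3)) = fun x => c 1 * u x 2 - c 2 * u x 1 := by
      funext x; simp [cross3, mk3]
    rw [h]; exact ((hu 2).constMul _).subP ((hu 1).constMul _)
  · show IsPolyDeg p fun x => cross3 c (u x) (1 : Fin 3)
    have h : (fun x => cross3 c (u x) (1 : Fin 3)) = fun x => c 2 * u x 0 - c 0 * u x 2 := by
      funext x; simp [cross3, mk3]
    rw [h]; exact ((hu 0).constMul _).subP ((hu 2).constMul _)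
  · show IsPolyDeg p fun x => cross3 c (u x) (2 : Fin 3)
    have h : (fun x => cross3 c (u x) (2 : Fin 3)) = fun x => c 0 * u x 1 - c 1 * u x 0 := by
      funext x; simp [cross3, mk3]
    rw [h]; exact ((hu 1).constMul _).subP ((hu 0).constMul _)

lemma mvec_add (M : Matrix (Fin 3) (Fin 3) ℝ) (u v : V3) :
    mvec M (u + v) = mvec M u + mvec M v := by
  ext i
  simp [mvec, mk3, Matrix.mulVec, dotProduct, Fin.sum_univ_three, PiLp.add_apply]
  ring

lemma mvec_neg (M : Matrix (Fin 3) (Fin 3) ℝ) (u : V3) : mvec M (-u) = -(mvec M u) := by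
  ext i
  simp [mvec, mk3, Matrix.mulVec, dotProduct, Fin.sum_univ_three, PiLp.neg_apply]

lemma mvec_mvec (M N : Matrix (Fin 3) (Fin 3) ℝ) (u : V3) :
    mvec M (mvec N u) = mvec (M * N) u := by
  ext i
  simp only [mvec, mk3]
  rw [show (fun j => (N.mulVec fun k => u k) j) = N.mulVec fun k => u k from rfl,
    Matrix.mulVec_mulVec]

lemma mvec_one (u : V3) : mvec 1 u = u := by
  ext i
  simp [mvec, mk3, Matrix.one_mulVec]

lemma cross3_add_left (u v w : V3) : cross3 (u + v) w = cross3 u w + cross3 v w := by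
  ext i
  fin_cases i <;>
    simp [cross3, mk3, PiLp.add_apply] <;> ring

/-- Key algebraic identity: `Aᵀ (Ax × w) = x × (adj(A) w)`. -/
lemma key_cross (A : Matrix (Fin 3) (Fin 3) ℝ) (x w : V3) :
    mvec A.transpose (cross3 (mvec A x) w) = cross3 x (mvec A.adjugate w) := by
  ext i
  fin_cases i <;>
    simp [mvec, mk3, cross3, Matrix.mulVec, dotProduct, Fin.sum_univ_three,
      Matrix.adjugate_fin_three, Matrix.transpose_apply, Matrix.vecHead, Matrix.vecTail,
      Function.comp] <;> ring

lemma memNed_piola (A : Matrix (Fin 3) (Fin 3) ℝ) (b : V3) {p : ℕ} {v : V3 → V3}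
    (hv : MemNed p v) : MemNed p (piola A b v) := by
  obtain ⟨a, c, ha, hc, hd⟩ := hv
  refine ⟨fun x => mvec A.transpose (a (affMap A b x)) +
      mvec A.transpose (cross3 b (c (affMap A b x))),
    fun x => mvec A.adjugate (c (affMap A b x)), ?_, ?_, ?_⟩
  · exact IsPolyV.addV ((IsPolyV.compAffineV A b ha).mvecV A.transpose)
      (((IsPolyV.compAffineV A b hc).crossConstV b).mvecV A.transpose)
  · exact (IsPolyV.compAffineV A b hc).mvecV A.adjugate
  · intro x
    have h1 : piola A b v x = mvec A.transpose (a (affMap A b x)) +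
        (mvec A.transpose (cross3 (mvec A x) (c (affMap A b x))) +
         mvec A.transpose (cross3 b (c (affMap A b x)))) := by
      show mvec A.transpose (v (affMap A b x)) = _
      rw [hd (affMap A b x), mvec_add]
      congr 1
      rw [show affMap A b x = mvec A x + b from rfl, cross3_add_left, mvec_add]
    rw [h1, key_cross]
    beta_reduce
    abel

lemma piola_comp (A C : Matrix (Fin 3) (Fin 3) ℝ) (b d : V3) (v : V3 → V3) :
    piola A b (piola C d v) = piola (C * A) (mvec C b + d) v := by
  funext x
  show mvec A.transpose (mvec C.transpose (v (affMap C d (affMap A b x)))) =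
    mvec (C * A).transpose (v (affMap (C * A) (mvec C b + d) x))
  have harg : affMap C d (affMap A b x) = affMap (C * A) (mvec C b + d) x := by
    show mvec C (mvec A x + b) + d = mvec (C * A) x + (mvec C b + d)
    rw [mvec_add, mvec_mvec]
    abel_nf
  rw [harg, mvec_mvec, ← Matrix.transpose_mul]

lemma piola_one (v : V3 → V3) : piola 1 0 v = v := by
  funext x
  show mvec (1 : Matrix (Fin 3) (Fin 3) ℝ).transpose (v (mvec 1 x + 0)) = v x
  rw [Matrix.transpose_one, mvec_one, add_zero, mvec_one]

lemma piola_left_inv (A : Matrix (Fin 3) (Fin 3) ℝ) (hA : IsUnit A.det) (b : V3)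
    (v : V3 → V3) : piola A⁻¹ (-(mvec A⁻¹ b)) (piola A b v) = v := by
  rw [piola_comp, Matrix.mul_nonsing_inv A hA, mvec_neg, mvec_mvec,
    Matrix.mul_nonsing_inv A hA, mvec_one, neg_add_cancel, piola_one]

lemma piola_right_inv (A : Matrix (Fin 3) (Fin 3) ℝ) (hA : IsUnit A.det) (b : V3)
    (v : V3 → V3) : piola A b (piola A⁻¹ (-(mvec A⁻¹ b)) v) = v := by
  rw [piola_comp, Matrix.nonsing_inv_mul A hA, add_neg_cancel, piola_one]

/-- The covariant Piola transformation is a bijection from `N_p(K)` onto `N_p(K̂)`. -/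
theorem stmt9 (A : Matrix (Fin 3) (Fin 3) ℝ) (hA : IsUnit A.det) (b : V3) (p : ℕ) :
    (∀ v : V3 → V3, MemNed p v → MemNed p (piola A b v)) ∧
    (∀ v w : V3 → V3, piola A b v = piola A b w → v = w) ∧
    (∀ vh : V3 → V3, MemNed p vh → ∃ v : V3 → V3, MemNed p v ∧ piola A b v = vh) := by
  refine ⟨fun v hv => memNed_piola A b hv, ?_, ?_⟩
  · intro v w h
    have h2 := congrArg (piola A⁻¹ (-(mvec A⁻¹ b))) h
    rwa [piola_left_inv A hA, piola_left_inv A hA] at h2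
  · intro vh hvh
    exact ⟨piola A⁻¹ (-(mvec A⁻¹ b)) vh, memNed_piola _ _ hvh, piola_right_inv A hA b vh⟩
end
end

section
/- Tangential trace preservation by the Piola map for H^1 fields: if T is an invertible affine map with K = T(K̂), F a face of K and F̂ = T^{-1}(F), then for v ∈ H^1(K)^3 the tangential component π_F^τ(v) vanishes on F if and only if the tangential component π_{F̂}^τ(ψ_T^c(v)) of the Piola-transformed field vanishes on F̂. -/
open MeasureTheory Metric Set

noncomputable section

namespace Stmt11Aux

lemma smul_apply' (c : ℝ) (x : V3) (k : Fin 3) : (c • x) k = c * x k := rfl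
lemma add_apply' (x y : V3) (k : Fin 3) : (x + y) k = x k + y k := rfl
lemma sub_apply' (x y : V3) (k : Fin 3) : (x - y) k = x k - y k := rfl
lemma mk3_apply (f : Fin 3 → ℝ) (k : Fin 3) : mk3 f k = f k := rfl

lemma dot3_expand (u v : V3) : dot3 u v = u 0 * v 0 + u 1 * v 1 + u 2 * v 2 := by
  simp [dot3, Fin.sum_univ_three]

lemma cross_dot_left (u v : V3) : dot3 (cross3 u v) u = 0 := by
  simp [dot3_expand, cross3, mk3]; ring

lemma cross_dot_right (u v : V3) : dot3 (cross3 u v) v = 0 := by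
  simp [dot3_expand, cross3, mk3]; ring

lemma lagrange (u v : V3) :
    dot3 u u * dot3 v v = dot3 u v ^ 2 + dot3 (cross3 u v) (cross3 u v) := by
  simp [dot3_expand, cross3, mk3]; ring

lemma bac_cab (w u v : V3) :
    cross3 w (cross3 u v) = dot3 w v • u - dot3 w u • v := by
  ext k
  fin_cases k <;>
    simp [cross3, mk3, dot3_expand, smul_apply', sub_apply'] <;> ring

lemma dot3_self_nonneg (u : V3) : 0 ≤ dot3 u u := by
  rw [dot3_expand]; nlinarith [sq_nonneg (u 0), sq_nonneg (u 1), sq_nonneg (u 2)]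

lemma dot3_eq_zero (u : V3) : dot3 u u = 0 ↔ u = 0 := by
  constructor
  · intro h
    rw [dot3_expand] at h
    have h0 : u 0 = 0 := by nlinarith [sq_nonneg (u 0), sq_nonneg (u 1), sq_nonneg (u 2)]
    have h1 : u 1 = 0 := by nlinarith [sq_nonneg (u 0), sq_nonneg (u 1), sq_nonneg (u 2)]
    have h2 : u 2 = 0 := by nlinarith [sq_nonneg (u 0), sq_nonneg (u 1), sq_nonneg (u 2)]
    ext k; fin_cases k <;> first | exact h0 | exact h1 | exact h2
  · rintro rfl; simp [dot3_expand]

lemma dot3_comm (u v : V3) : dot3 u v = dot3 v u := by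
  simp [dot3_expand]; ring

lemma dot3_smul_left (c : ℝ) (u v : V3) : dot3 (c • u) v = c * dot3 u v := by
  simp [dot3_expand, smul_apply']; ring

lemma dot3_smul_right (c : ℝ) (u v : V3) : dot3 u (c • v) = c * dot3 u v := by
  simp [dot3_expand, smul_apply']; ring

lemma dot3_smul_smul (c : ℝ) (u v : V3) : dot3 (c • u) (c • v) = c ^ 2 * dot3 u v := by
  simp [dot3_expand, smul_apply']; ring

lemma dot3_combo (a b : ℝ) (x y : V3) :
    dot3 (a • x + b • y) (a • x + b • y)
      = a ^ 2 * dot3 x x + 2 * a * b * dot3 x y + b ^ 2 * dot3 y y := by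
  simp [dot3_expand, smul_apply', add_apply']; ring

lemma dot3_right_combo (a b : ℝ) (w x y : V3) :
    dot3 w (a • x + b • y) = a * dot3 w x + b * dot3 w y := by
  simp [dot3_expand, smul_apply', add_apply']; ring

lemma dot3_sub_sq (lam : ℝ) (w r : V3) :
    dot3 (w - lam • r) (w - lam • r)
      = dot3 w w - 2 * lam * dot3 w r + lam ^ 2 * dot3 r r := by
  simp [dot3_expand, smul_apply', sub_apply']; ring

/-- linear independence of the two edge vectors of a face -/
lemma edges_indep (T : Tetra) (i : Fin 4) :
    LinearIndependent ℝ
      ![T.vert (Tetra.others i 1) - T.vert (Tetra.others i 0),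
        T.vert (Tetra.others i 2) - T.vert (Tetra.others i 0)] := by
  have hAI : AffineIndependent ℝ (T.vert ∘ (⟨Tetra.others i, Fin.succAbove_right_injective⟩ : Fin 3 ↪ Fin 4)) :=
    T.indep.comp_embedding _
  have hLI := (affineIndependent_iff_linearIndependent_vsub ℝ _ (0 : Fin 3)).mp hAI
  have hg : Function.Injective
      (![⟨1, by decide⟩, ⟨2, by decide⟩] : Fin 2 → {x : Fin 3 // x ≠ 0}) := by
    intro a b hab
    fin_cases a <;> fin_cases b <;> simp_all
  have := hLI.comp _ hg
  convert this using 1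
  funext j
  fin_cases j <;> rfl
  rfl

lemma cross_self_ne_zero {e1 e2 : V3} (h : LinearIndependent ℝ ![e1, e2]) :
    dot3 (cross3 e1 e2) (cross3 e1 e2) ≠ 0 := by
  have hpair := LinearIndependent.pair_iff.mp h
  intro hR
  have hLag := lagrange e1 e2
  rw [hR, add_zero] at hLag
  have huu : dot3 (dot3 e2 e2 • e1 + (-(dot3 e1 e2)) • e2)
      (dot3 e2 e2 • e1 + (-(dot3 e1 e2)) • e2) = 0 := by
    rw [dot3_combo]
    linear_combination (dot3 e2 e2) * hLag
  have hu0 := (dot3_eq_zero _).mp huu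
  have h22 := (hpair _ _ hu0).1
  have he2z : e2 = 0 := (dot3_eq_zero _).mp h22
  have := (hpair 0 1 (by rw [he2z]; simp)).2
  norm_num at this

lemma raw_ne (T : Tetra) (i : Fin 4) :
    dot3 (T.rawNormal i) (T.rawNormal i) ≠ 0 :=
  cross_self_ne_zero (edges_indep T i)

lemma normal_spec (T : Tetra) (i : Fin 4) :
    ∃ c : ℝ, T.normal i = c • T.rawNormal i ∧ dot3 (T.normal i) (T.normal i) = 1 := by
  have hR := raw_ne T i
  have hR0 := dot3_self_nonneg (T.rawNormal i)
  refine ⟨_, rfl, ?_⟩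
  rw [Tetra.normal, dot3_smul_smul]
  have hsq : (if dot3 (T.rawNormal i) (T.vert i - T.vert (Tetra.others i 0)) ≤ 0 then
       (Real.sqrt (dot3 (T.rawNormal i) (T.rawNormal i)))⁻¹
     else -(Real.sqrt (dot3 (T.rawNormal i) (T.rawNormal i)))⁻¹) ^ 2
      = (dot3 (T.rawNormal i) (T.rawNormal i))⁻¹ := by
    have hbase : ((Real.sqrt (dot3 (T.rawNormal i) (T.rawNormal i)))⁻¹) ^ 2
        = (dot3 (T.rawNormal i) (T.rawNormal i))⁻¹ := by
      rw [inv_pow, Real.sq_sqrt hR0]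
    split
    · exact hbase
    · rw [neg_sq]; exact hbase
  rw [hsq, inv_mul_cancel₀ hR]

/-- the key pointwise characterization of vanishing tangential component -/
lemma tang_zero_iff (e1 e2 n : V3) (c : ℝ) (hn : n = c • cross3 e1 e2)
    (hu : dot3 n n = 1) (w : V3) :
    tang n w = 0 ↔ dot3 w e1 = 0 ∧ dot3 w e2 = 0 := by
  set raw := cross3 e1 e2 with hraw
  have hcR : c ^ 2 * dot3 raw raw = 1 := by
    rw [← dot3_smul_smul, ← hn, hu]
  have hRne : dot3 raw raw ≠ 0 := by
    intro h; rw [h, mul_zero] at hcR; norm_num at hcR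
  constructor
  · intro h
    have hw : w = dot3 w n • n := by
      have := sub_eq_zero.mp h
      exact this
    constructor <;>
      rw [hw, hn, dot3_smul_left, dot3_smul_left]
    · rw [dot3_comm, cross_dot_left]; ring
    · rw [dot3_comm, cross_dot_right]; ring
  · rintro ⟨h1, h2⟩
    have hcr : cross3 w raw = 0 := by
      rw [hraw, bac_cab, h1, h2]; simp
    have hLag := lagrange w raw
    rw [hcr] at hLag
    rw [show dot3 (0 : V3) (0 : V3) = 0 by simp [dot3_expand], add_zero] at hLag
    set lam := dot3 w raw / dot3 raw raw with hlam
    have hwlam : w = lam • raw := by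
      rw [← sub_eq_zero]
      apply (dot3_eq_zero _).mp
      rw [dot3_sub_sq, hlam]
      field_simp
      nlinarith [hLag]
    rw [hwlam]
    show lam • raw - dot3 (lam • raw) n • n = 0
    rw [hn]
    have hd : dot3 (lam • raw) (c • raw) = lam * c * dot3 raw raw := by
      rw [dot3_smul_left, dot3_smul_right]; ring
    rw [hd, smul_smul, ← sub_smul]
    have hz : lam - lam * c * dot3 raw raw * c = 0 := by
      have h' : lam * (1 - c ^ 2 * dot3 raw raw) = lam - lam * c * dot3 raw raw * c := by
        ring
      rw [← h', hcR]; ring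
    rw [hz, zero_smul]


def linA (A : Matrix (Fin 3) (Fin 3) ℝ) : V3 →ₗ[ℝ] V3 where
  toFun := mvec A
  map_add' x y := by
    ext k
    simp [mvec, mk3, Matrix.mulVec, dotProduct, Fin.sum_univ_three, add_apply']
    ring
  map_smul' c x := by
    ext k
    simp [mvec, mk3, Matrix.mulVec, dotProduct, Fin.sum_univ_three, smul_apply']
    ring

def affA (A : Matrix (Fin 3) (Fin 3) ℝ) (b : V3) : V3 →ᵃ[ℝ] V3 where
  toFun := affMap A b
  linear := linA A
  map_vadd' p w := by
    show affMap A b (w + p) = mvec A w + affMap A b p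
    show mvec A (w + p) + b = mvec A w + (mvec A p + b)
    rw [show mvec A (w + p) = mvec A w + mvec A p from (linA A).map_add w p, add_assoc]

lemma vert_image (T : Tetra) (i : Fin 4) :
    T.vert '' {j | j ≠ i}
      = {T.vert (Tetra.others i 0), T.vert (Tetra.others i 1),
         T.vert (Tetra.others i 2)} := by
  ext y
  simp only [Set.mem_image, Set.mem_setOf_eq, Set.mem_insert_iff, Set.mem_singleton_iff]
  constructor
  · rintro ⟨j, hj, rfl⟩
    obtain ⟨k, rfl⟩ := Fin.exists_succAbove_eq hj
    fin_cases k
    · exact Or.inl rfl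
    · exact Or.inr (Or.inl rfl)
    · exact Or.inr (Or.inr rfl)
  · rintro (rfl | rfl | rfl)
    · exact ⟨_, Fin.succAbove_ne i 0, rfl⟩
    · exact ⟨_, Fin.succAbove_ne i 1, rfl⟩
    · exact ⟨_, Fin.succAbove_ne i 2, rfl⟩

lemma vectorSpan_triple (p0 p1 p2 : V3) :
    vectorSpan ℝ ({p0, p1, p2} : Set V3) = Submodule.span ℝ {p1 - p0, p2 - p0} := by
  rw [vectorSpan_eq_span_vsub_set_right (k := ℝ)
    (show p0 ∈ ({p0, p1, p2} : Set V3) by simp)]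
  rw [Set.image_insert_eq, Set.image_insert_eq, Set.image_singleton]
  simp only [vsub_eq_sub, sub_self]
  rw [Submodule.span_insert_zero]

lemma span_map (A : Matrix (Fin 3) (Fin 3) ℝ) (b : V3) (That T : Tetra) (ih i : Fin 4)
    (hface : affMap A b '' That.face ih = T.face i) :
    Submodule.map (linA A)
      (Submodule.span ℝ {That.vert (Tetra.others ih 1) - That.vert (Tetra.others ih 0),
                         That.vert (Tetra.others ih 2) - That.vert (Tetra.others ih 0)})
      = Submodule.span ℝ {T.vert (Tetra.others i 1) - T.vert (Tetra.others i 0),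
                          T.vert (Tetra.others i 2) - T.vert (Tetra.others i 0)} := by
  have h1 : convexHull ℝ ((affA A b) '' (That.vert '' {j | j ≠ ih}))
      = convexHull ℝ (T.vert '' {j | j ≠ i}) := by
    rw [← AffineMap.image_convexHull]
    exact hface
  have h2 : affineSpan ℝ ((affA A b) '' (That.vert '' {j | j ≠ ih}))
      = affineSpan ℝ (T.vert '' {j | j ≠ i}) := by
    rw [← affineSpan_convexHull, h1, affineSpan_convexHull]
  have h3 : (affineSpan ℝ (That.vert '' {j | j ≠ ih})).map (affA A b)
      = affineSpan ℝ (T.vert '' {j | j ≠ i}) := by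
    rw [AffineSubspace.map_span, h2]
  have h4 := congrArg AffineSubspace.direction h3
  rw [AffineSubspace.map_direction, direction_affineSpan, direction_affineSpan] at h4
  rw [vert_image, vert_image, vectorSpan_triple, vectorSpan_triple] at h4
  exact h4

lemma dot3_transpose (A : Matrix (Fin 3) (Fin 3) ℝ) (w u : V3) :
    dot3 (mvec A.transpose w) u = dot3 w (mvec A u) := by
  simp [dot3_expand, mvec, mk3, Matrix.mulVec, dotProduct, Fin.sum_univ_three,
    Matrix.transpose_apply]
  ring

lemma dot_zero_of_mem_span {w e1 e2 u : V3} (h1 : dot3 w e1 = 0) (h2 : dot3 w e2 = 0)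
    (hu : u ∈ Submodule.span ℝ ({e1, e2} : Set V3)) : dot3 w u = 0 := by
  obtain ⟨a, b, rfl⟩ := Submodule.mem_span_pair.mp hu
  rw [dot3_right_combo, h1, h2]; ring

end Stmt11Aux


/-- Tangential trace preservation by the Piola map: the tangential component of `v`
vanishes on the face `F` iff that of `ψ_T^c(v)` vanishes on `F̂ = T⁻¹(F)`. -/
theorem stmt11 (A : Matrix (Fin 3) (Fin 3) ℝ) (hA : IsUnit A.det) (b : V3)
    (That T : Tetra) (hmap : affMap A b '' That.K = T.K) (ih i : Fin 4)
    (hface : affMap A b '' That.face ih = T.face i)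
    (v : V3 → V3) (hv : ContDiff ℝ 1 v) :
    ((∀ x ∈ T.face i, tang (T.normal i) (v x) = 0) ↔
     (∀ x ∈ That.face ih, tang (That.normal ih) (piola A b v x) = 0)) := by
  obtain ⟨c, hcn, hcu⟩ := Stmt11Aux.normal_spec T i
  obtain ⟨d, hdn, hdu⟩ := Stmt11Aux.normal_spec That ih
  have hspan := Stmt11Aux.span_map A b That T ih i hface
  have hTiff := Stmt11Aux.tang_zero_iff
    (T.vert (Tetra.others i 1) - T.vert (Tetra.others i 0))
    (T.vert (Tetra.others i 2) - T.vert (Tetra.others i 0)) (T.normal i) c hcn hcu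
  have hHiff := Stmt11Aux.tang_zero_iff
    (That.vert (Tetra.others ih 1) - That.vert (Tetra.others ih 0))
    (That.vert (Tetra.others ih 2) - That.vert (Tetra.others ih 0))
    (That.normal ih) d hdn hdu
  constructor
  · intro h x hx
    have hx' : affMap A b x ∈ T.face i := by
      rw [← hface]; exact Set.mem_image_of_mem _ hx
    obtain ⟨hw1, hw2⟩ := (hTiff _).mp (h _ hx')
    refine (hHiff _).mpr ⟨?_, ?_⟩
    · show dot3 (mvec A.transpose (v (affMap A b x)))
        (That.vert (Tetra.others ih 1) - That.vert (Tetra.others ih 0)) = 0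
      rw [Stmt11Aux.dot3_transpose]
      refine Stmt11Aux.dot_zero_of_mem_span hw1 hw2 ?_
      rw [← hspan]
      exact Submodule.mem_map_of_mem (Submodule.subset_span (Set.mem_insert _ _))
    · show dot3 (mvec A.transpose (v (affMap A b x)))
        (That.vert (Tetra.others ih 2) - That.vert (Tetra.others ih 0)) = 0
      rw [Stmt11Aux.dot3_transpose]
      refine Stmt11Aux.dot_zero_of_mem_span hw1 hw2 ?_
      rw [← hspan]
      exact Submodule.mem_map_of_mem (Submodule.subset_span
        (Set.mem_insert_of_mem _ rfl))
  · intro h x hx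
    rw [← hface] at hx
    obtain ⟨y, hy, rfl⟩ := hx
    obtain ⟨hw1, hw2⟩ := (hHiff _).mp (h y hy)
    refine (hTiff _).mpr ⟨?_, ?_⟩
    · have he : (T.vert (Tetra.others i 1) - T.vert (Tetra.others i 0)) ∈
          Submodule.map (Stmt11Aux.linA A)
            (Submodule.span ℝ
              {That.vert (Tetra.others ih 1) - That.vert (Tetra.others ih 0),
               That.vert (Tetra.others ih 2) - That.vert (Tetra.others ih 0)}) := by
        rw [hspan]; exact Submodule.subset_span (Set.mem_insert _ _)
      obtain ⟨u, hu, hLu⟩ := he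
      rw [← hLu]
      exact ((Stmt11Aux.dot3_transpose A (v (affMap A b y)) u).symm).trans
        (Stmt11Aux.dot_zero_of_mem_span hw1 hw2 hu)
    · have he : (T.vert (Tetra.others i 2) - T.vert (Tetra.others i 0)) ∈
          Submodule.map (Stmt11Aux.linA A)
            (Submodule.span ℝ
              {That.vert (Tetra.others ih 1) - That.vert (Tetra.others ih 0),
               That.vert (Tetra.others ih 2) - That.vert (Tetra.others ih 0)}) := by
        rw [hspan]; exact Submodule.subset_span (Set.mem_insert_of_mem _ rfl)
      obtain ⟨u, hu, hLu⟩ := he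
      rw [← hLu]
      exact ((Stmt11Aux.dot3_transpose A (v (affMap A b y)) u).symm).trans
        (Stmt11Aux.dot_zero_of_mem_span hw1 hw2 hu)

end
end
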